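/- arXiv:1411.2069 — 4 statements merged into one kernel-verified Lean document; each statement's English description precedes it below -/
import Mathlib

section
/- Let G be a graph on node set {0,1,...,2k+1} with G - 0 = C_{2k+1} (the odd cycle on {1,...,2k+1}) and deg_G(0) = s ≥ 1. Then the number of odd central cycles of G is odd. In particular G has at least one odd central cycle. -/
/-!
A cycle has as many nodes as edges. The central cycles together use every edge of
`C_{2k+1}` once and each of the `s` edges at node `0` twice, so their lengths add up to the odd
number `2k + 1 + 2s`; a sum of natural numbers is odd exactly when an odd number of its terms
are odd.
-/

/-- Nodes `i,j ∈ {1,…,2k+1}` are consecutive on the cycle `C_{2k+1}`. -/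
def consec (k : ℕ) (i j : Fin (2*k+2)) : Prop :=
  (j : ℕ) = (i : ℕ) + 1 ∨ (i : ℕ) = (j : ℕ) + 1 ∨
    ((i : ℕ) = 1 ∧ (j : ℕ) = 2*k+1) ∨ ((i : ℕ) = 2*k+1 ∧ (j : ℕ) = 1)

/-- Number of nodes of the `i`-th central cycle `D_i`, where
`v : Fin s → Fin (2k+2)` is the increasing enumeration of the neighbours of
node `0` on the cycle `C_{2k+1}`.  For `i < s-1`, `D_i` consists of node `0`
and the path of `C_{2k+1}` from `v i` to `v (i+1)`; the last central cycle
consists of node `0` and the path from `v (s-1)` through `2k+1` and `1` to `v 0`. -/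
def centralLen (k s : ℕ) (v : Fin s → Fin (2*k+2)) (i : Fin s) : ℕ :=
  if h : (i : ℕ) + 1 < s then ((v ⟨(i : ℕ) + 1, h⟩ : ℕ) - (v i : ℕ)) + 2
  else (2*k + 3) - (v i : ℕ) + (v ⟨0, i.pos⟩ : ℕ)

section OrderedSub

variable {M : Type*} [AddCommMonoid M] [PartialOrder M] [Sub M] [OrderedSub M] [AddLeftMono M]
  [AddLeftReflectLE M] [ExistsAddOfLE M]

theorem Fin.sum_univ_succ_tsub_castSucc {n : ℕ} {f : Fin (n + 1) → M} (hf : Monotone f) :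
    ∑ i : Fin n, (f i.succ - f i.castSucc) = f (Fin.last n) - f 0 := by
  induction n with
  | zero => exact (tsub_eq_of_eq_add (zero_add _).symm).symm
  | succ n ih =>
    have ih' := ih (f := f ∘ Fin.castSucc) (hf.comp Fin.strictMono_castSucc.monotone)
    simp only [Function.comp_apply, Fin.castSucc_zero] at ih'
    rw [Fin.sum_univ_castSucc]
    simp only [Fin.succ_castSucc]
    rw [ih', Fin.succ_last, add_comm,
      tsub_add_tsub_cancel (hf (Fin.le_last _)) (hf (Fin.zero_le _))]

end OrderedSub

section CentralCycles

variable {k n : ℕ} (v : Fin (n + 1) → Fin (2*k+2))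

theorem centralLen_castSucc (i : Fin n) :
    centralLen k (n + 1) v i.castSucc = ((v i.succ : ℕ) - v i.castSucc) + 2 := by
  simp [centralLen, Fin.succ]

theorem centralLen_last :
    centralLen k (n + 1) v (Fin.last n) = (2*k + 3) - (v (Fin.last n) : ℕ) + v 0 := by
  simp [centralLen]

theorem sum_centralLen (hv : Monotone v) :
    ∑ i, centralLen k (n + 1) v i = 2*k + 1 + 2*(n + 1) := by
  have hval : Monotone fun i => (v i : ℕ) := fun _ _ h => hv h
  have htel := Fin.sum_univ_succ_tsub_castSucc hval
  have hfirst : (v 0 : ℕ) ≤ v (Fin.last n) := hval (Fin.zero_le _)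
  have hlast : (v (Fin.last n) : ℕ) < 2*k + 2 := (v _).isLt
  rw [Fin.sum_univ_castSucc, centralLen_last]
  simp only [centralLen_castSucc, Finset.sum_add_distrib, htel, Finset.sum_const,
    Finset.card_univ, Fintype.card_fin, smul_eq_mul]
  omega

end CentralCycles

theorem odd_card_filter_odd_centralLen {k s : ℕ} (hs : 1 ≤ s) {v : Fin s → Fin (2*k+2)}
    (hv : Monotone v) :
    Odd (Finset.univ.filter fun i : Fin s => Odd (centralLen k s v i)).card := by
  obtain ⟨n, rfl⟩ : ∃ n, s = n + 1 := ⟨s - 1, by omega⟩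
  rw [← Finset.odd_sum_iff_odd_card_odd, sum_centralLen v hv]
  exact ⟨k + n + 1, by ring⟩

theorem stmt5_general (k s : ℕ) (hs : 1 ≤ s)
    (v : Fin s → Fin (2*k+2)) (hmono : StrictMono v) :
    Odd ((Finset.univ.filter (fun i : Fin s => Odd (centralLen k s v i))).card) ∧
    ∃ i : Fin s, Odd (centralLen k s v i) := by
  have hodd := odd_card_filter_odd_centralLen hs hmono.monotone
  obtain ⟨i, hi⟩ := Finset.card_pos.mp hodd.pos
  exact ⟨hodd, i, (Finset.mem_filter.mp hi).2⟩

/-- If `G - 0 = C_{2k+1}` and node `0` has `s ≥ 1` neighbours, then the number of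
odd central cycles of `G` is odd; in particular there is at least one. -/
theorem stmt5 (k s : ℕ) (hk : 1 ≤ k) (hs : 1 ≤ s)
    (G : SimpleGraph (Fin (2*k+2)))
    (hGC : ∀ i j : Fin (2*k+2), i ≠ 0 → j ≠ 0 → (G.Adj i j ↔ consec k i j))
    (v : Fin s → Fin (2*k+2)) (hmono : StrictMono v)
    (hne : ∀ i, v i ≠ 0) (hnbr : ∀ i, G.Adj 0 (v i))
    (hall : ∀ u : Fin (2*k+2), G.Adj 0 u → ∃ i, v i = u) :
    Odd ((Finset.univ.filter (fun i : Fin s => Odd (centralLen k s v i))).card) ∧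
    ∃ i : Fin s, Odd (centralLen k s v i) :=
  stmt5_general k s hs v hmono
end

section
/- Let Y be a symmetric (n+1)×(n+1) positive semidefinite matrix (rows/columns indexed 0,...,n) arising in the k-stretching construction, i.e., Y = [[1, x̄ᵀ, x_v],[x̄, X̄, ȳ],[x_v, ȳᵀ, x_v]]. Then the (n+3)×(n+3) matrix Ỹ = [[1, x̄ᵀ, x_v, x_v, 1-x_v],[x̄, X̄, ȳ, ȳ, x̄-ȳ],[x_v, ȳᵀ, x_v, x_v, 0],[x_v, ȳᵀ, x_v, x_v, 0],[1-x_v, (x̄-ȳ)ᵀ, 0, 0, 1-x_v]] is also positive semidefinite. -/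
/-!
`Ỹ` is the Gram matrix, with respect to `Y`, of the vectors `e₀`, `e_j` (`j ∈ ι`), `e_v`, `e_v`
and `e₀ - e_v`; that is, `Ỹ = Aᵀ Y A` for the matrix `A` with these columns, and congruence
preserves positive semidefiniteness.
-/

/-- The matrix `Y = [[1, x̄ᵀ, x_v],[x̄, X̄, ȳ],[x_v, ȳᵀ, x_v]]` from the
`k`-stretching construction (first index block is the `0` row, the middle block
is indexed by `ι`, the last block is the `v` row). -/
def Ymat {ι : Type} (xb : ι → ℝ) (xv : ℝ) (X : Matrix ι ι ℝ) (yb : ι → ℝ) :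
    Matrix (Unit ⊕ ι ⊕ Unit) (Unit ⊕ ι ⊕ Unit) ℝ :=
  Matrix.of fun p q =>
    match p, q with
    | Sum.inl _, Sum.inl _ => 1
    | Sum.inl _, Sum.inr (Sum.inl j) => xb j
    | Sum.inl _, Sum.inr (Sum.inr _) => xv
    | Sum.inr (Sum.inl i), Sum.inl _ => xb i
    | Sum.inr (Sum.inl i), Sum.inr (Sum.inl j) => X i j
    | Sum.inr (Sum.inl i), Sum.inr (Sum.inr _) => yb i
    | Sum.inr (Sum.inr _), Sum.inl _ => xv
    | Sum.inr (Sum.inr _), Sum.inr (Sum.inl j) => yb j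
    | Sum.inr (Sum.inr _), Sum.inr (Sum.inr _) => xv

/-- The matrix `Ỹ` obtained from `Y` by duplicating the `v` row/column (new
indices `v₁ = 0`, `v₂ = 1`) and appending the row/column
`(1-x_v, (x̄-ȳ)ᵀ, 0, 0, 1-x_v)` (index `u = 2`). -/
def Ytil {ι : Type} (xb : ι → ℝ) (xv : ℝ) (X : Matrix ι ι ℝ) (yb : ι → ℝ) :
    Matrix (Unit ⊕ ι ⊕ Fin 3) (Unit ⊕ ι ⊕ Fin 3) ℝ :=
  Matrix.of fun p q =>
    match p, q with
    | Sum.inl _, Sum.inl _ => 1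
    | Sum.inl _, Sum.inr (Sum.inl j) => xb j
    | Sum.inl _, Sum.inr (Sum.inr i) => if i = 2 then 1 - xv else xv
    | Sum.inr (Sum.inl i), Sum.inl _ => xb i
    | Sum.inr (Sum.inl i), Sum.inr (Sum.inl j) => X i j
    | Sum.inr (Sum.inl i), Sum.inr (Sum.inr j) => if j = 2 then xb i - yb i else yb i
    | Sum.inr (Sum.inr i), Sum.inl _ => if i = 2 then 1 - xv else xv
    | Sum.inr (Sum.inr i), Sum.inr (Sum.inl j) => if i = 2 then xb j - yb j else yb j
    | Sum.inr (Sum.inr i), Sum.inr (Sum.inr j) =>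
        if i = 2 then (if j = 2 then 1 - xv else 0)
        else (if j = 2 then 0 else xv)

open Matrix

def stretchMatrix (ι : Type) [DecidableEq ι] :
    Matrix (Unit ⊕ ι ⊕ Unit) (Unit ⊕ ι ⊕ Fin 3) ℝ :=
  Matrix.of fun r c =>
    match r, c with
    | Sum.inl _, Sum.inl _ => 1
    | Sum.inl _, Sum.inr (Sum.inr k) => if k = 2 then 1 else 0
    | Sum.inr (Sum.inl i), Sum.inr (Sum.inl j) => if i = j then 1 else 0
    | Sum.inr (Sum.inr _), Sum.inr (Sum.inr k) => if k = 2 then -1 else 1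
    | _, _ => 0

theorem Ytil_eq_transpose_mul_Ymat_mul {ι : Type} [Fintype ι] [DecidableEq ι]
    (xb : ι → ℝ) (xv : ℝ) (X : Matrix ι ι ℝ) (yb : ι → ℝ) :
    Ytil xb xv X yb = (stretchMatrix ι)ᵀ * Ymat xb xv X yb * stretchMatrix ι := by
  ext p q
  rcases p with _ | p | p <;> rcases q with _ | q | q <;>
    simp [Ytil, Ymat, stretchMatrix, mul_apply, Fintype.sum_sum_type, ite_mul, mul_ite,
      Finset.sum_ite_eq'] <;>
    split_ifs <;> ring

theorem stmt9_general {ι : Type} [Fintype ι]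
    (xb : ι → ℝ) (xv : ℝ) (X : Matrix ι ι ℝ) (yb : ι → ℝ)
    (hY : (Ymat xb xv X yb).PosSemidef) :
    (Ytil xb xv X yb).PosSemidef := by
  classical
  rw [Ytil_eq_transpose_mul_Ymat_mul]
  simpa only [conjTranspose_eq_transpose_of_trivial] using
    hY.conjTranspose_mul_mul_same (stretchMatrix ι)

/-- Positive semidefiniteness of `Y` implies that of `Ỹ`. -/
theorem stmt9 {ι : Type} [Fintype ι] [DecidableEq ι]
    (xb : ι → ℝ) (xv : ℝ) (X : Matrix ι ι ℝ) (yb : ι → ℝ)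
    (hY : (Ymat xb xv X yb).PosSemidef) :
    (Ytil xb xv X yb).PosSemidef :=
  stmt9_general xb xv X yb hY
end

section
/- For k ≥ 2 and β_k = 1/(2k+2), define sequences A_0 = 1, B_0 = 2, A_ℓ = 2 B_{ℓ-1} - (1-β_k)² A_{ℓ-1}, B_ℓ = 2 A_ℓ - (1+β_k)² B_{ℓ-1}. Then for all ℓ ≥ 0, A_ℓ > 0 and B_ℓ > 0. -/
/-- The recursively defined minors `A_ℓ`, `B_ℓ` (with `β_k = 1/(2k+2)`,
`A_0 = 1`, `B_0 = 2`, `A_{ℓ+1} = 2B_ℓ - (1-β_k)²A_ℓ`,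
`B_{ℓ+1} = 2A_{ℓ+1} - (1+β_k)²B_ℓ`) are positive for all `ℓ`. -/
theorem stmt11 (k : ℕ) (hk : 2 ≤ k) (βk : ℝ) (hβ : βk = 1 / (2 * (k : ℝ) + 2))
    (A B : ℕ → ℝ) (hA0 : A 0 = 1) (hB0 : B 0 = 2)
    (hA : ∀ ℓ : ℕ, A (ℓ + 1) = 2 * B ℓ - (1 - βk) ^ 2 * A ℓ)
    (hB : ∀ ℓ : ℕ, B (ℓ + 1) = 2 * A (ℓ + 1) - (1 + βk) ^ 2 * B ℓ) :
    ∀ ℓ : ℕ, 0 < A ℓ ∧ 0 < B ℓ := by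
  have hk' : (2 : ℝ) ≤ (k : ℝ) := by exact_mod_cast hk
  have hβpos : 0 < βk := by rw [hβ]; positivity
  have hβlt : βk < 1 := by
    rw [hβ]
    rw [div_lt_one (by linarith)]
    linarith
  have key : ∀ ℓ : ℕ, 0 < A ℓ ∧ (1 - βk) * A ℓ ≤ B ℓ := by
    intro ℓ
    induction ℓ with
    | zero => constructor <;> [rw [hA0]; rw [hA0, hB0]] <;> nlinarith
    | succ n ih =>
      obtain ⟨hApos, hAB⟩ := ih
      have hA' : 0 < A (n + 1) := by
        rw [hA]
        nlinarith [mul_le_mul_of_nonneg_left hAB (by linarith : (0:ℝ) ≤ 1 - βk),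
          mul_pos hApos hβpos, mul_pos hβpos (mul_pos hβpos hApos)]
      refine ⟨hA', ?_⟩
      rw [hB, hA]
      nlinarith [mul_nonneg (by nlinarith : (0:ℝ) ≤ (1 + βk) * (1 - βk))
        (by linarith : (0:ℝ) ≤ B n - (1 - βk) * A n)]
  intro ℓ
  obtain ⟨hApos, hAB⟩ := key ℓ
  exact ⟨hApos, lt_of_lt_of_le (by nlinarith) hAB⟩
end

section
/- Let k ≥ 2, β_k = 1/(2k+2), and let Ŷ(k) be the (2k+1)×(2k+1) symmetric matrix with all diagonal entries 2, entries Ŷ_{i,i+1} = Ŷ_{i+1,i} alternating 1-β_k, 1+β_k, 1-β_k, ... for i = 1,...,2k, corner entries Ŷ_{1,2k+1} = Ŷ_{2k+1,1} = 1+β_k, and all other entries 0. Then Ŷ(k) is positive definite. -/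
/-- The `(2k+1)×(2k+1)` matrix `Ŷ(k)`: diagonal entries `2`, super/subdiagonal
entries alternating `1-β_k, 1+β_k, …` (in terms of the `1`-based index
`a = i+1`), corner entries `1+β_k`, all other entries `0`, where
`β_k = 1/(2k+2)`. -/
noncomputable def Yhat (k : ℕ) : Matrix (Fin (2*k+1)) (Fin (2*k+1)) ℝ :=
  Matrix.of fun i j =>
    let a := (i : ℕ) + 1
    let b := (j : ℕ) + 1
    let β : ℝ := 1 / (2 * (k : ℝ) + 2)
    if a = b then 2
    else if b = a + 1 then (if Odd a then 1 - β else 1 + β)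
    else if a = b + 1 then (if Odd b then 1 - β else 1 + β)
    else if (a = 1 ∧ b = 2*k+1) ∨ (a = 2*k+1 ∧ b = 1) then 1 + β
    else 0

/-!
Index the rows by `Fin (2k+1)` viewed as a cycle, so that `Ŷ(k)` is `2` on the diagonal and
carries a weight `w_i ∈ {1 - β, 1 + β}` on the edge `{i, i+1}`. Then
`xᵀ Ŷ x = ∑ w_i (x_i + x_{i+1})² - 2β x_{2k}²`: the defects `1 - w_i` alternate in sign along the
path `0, …, 2k` and telescope, except that the last two edges both have weight `1 + β`.
On an odd cycle the alternating sum of the `x_i + x_{i+1}` starting at `j` is `2 x_j`, so by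
Cauchy–Schwarz `4 x_{2k}² ≤ (2k+1) ∑ (x_i + x_{i+1})²`, and this sum vanishes only at `x = 0`.
Hence `xᵀ Ŷ x ≥ (1 - β (2k+3) / 2) ∑ (x_i + x_{i+1})² > 0`.
-/

open Finset Matrix Fin.NatCast

theorem sum_range_neg_one_pow_mul_add_succ {R : Type*} [CommRing R] (y : ℕ → R) (N : ℕ) :
    ∑ i ∈ range N, (-1) ^ i * (y i + y (i + 1)) = y 0 - (-1) ^ N * y N := by
  induction N with
  | zero => simp
  | succ N ih => rw [sum_range_succ, ih, pow_succ]; ring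

section OddCycle

variable {m : ℕ}

theorem two_mul_eq_alternating_sum_odd_cycle (x : Fin (2 * m + 1) → ℝ) (j : Fin (2 * m + 1)) :
    2 * x j = ∑ i : Fin (2 * m + 1), (-1) ^ (i : ℕ) * (x (j + i) + x (j + i + 1)) := by
  have h := sum_range_neg_one_pow_mul_add_succ (fun i : ℕ => x (j + (i : Fin (2 * m + 1))))
    (2 * m + 1)
  rw [← Fin.sum_univ_eq_sum_range] at h
  simp only [Fin.natCast_self, Nat.cast_zero, add_zero,
    Odd.neg_one_pow (odd_two_mul_add_one m)] at h
  simp only [Nat.cast_succ, Fin.cast_val_eq_self, ← add_assoc] at h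
  rw [h]
  ring

theorem sq_two_mul_le_odd_cycle (x : Fin (2 * m + 1) → ℝ) (j : Fin (2 * m + 1)) :
    (2 * x j) ^ 2 ≤ (2 * m + 1) * ∑ i, (x i + x (i + 1)) ^ 2 := by
  calc (2 * x j) ^ 2
      = (∑ i : Fin (2 * m + 1), (-1) ^ (i : ℕ) * (x (j + i) + x (j + i + 1))) ^ 2 := by
        rw [two_mul_eq_alternating_sum_odd_cycle]
    _ ≤ (∑ i : Fin (2 * m + 1), ((-1 : ℝ) ^ (i : ℕ)) ^ 2) *
          ∑ i, (x (j + i) + x (j + i + 1)) ^ 2 :=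
        sum_mul_sq_le_sq_mul_sq _ _ _
    _ = (2 * m + 1) * ∑ i, (x i + x (i + 1)) ^ 2 := by
        congr 1
        · simp [← pow_mul, pow_mul']
        · exact Equiv.sum_comp (Equiv.addLeft j) fun i => (x i + x (i + 1)) ^ 2

theorem sum_sq_add_succ_pos_odd_cycle {x : Fin (2 * m + 1) → ℝ} (hx : x ≠ 0) :
    0 < ∑ i, (x i + x (i + 1)) ^ 2 := by
  obtain ⟨j, hj⟩ := Function.ne_iff.mp hx
  have hle := sq_two_mul_le_odd_cycle x j
  have hpos : 0 < (2 * x j) ^ 2 := sq_pos_of_ne_zero (by simpa using hj)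
  nlinarith

end OddCycle

theorem sum_two_mul_sq_add_eq_sum_weight_mul_sq {n : ℕ} (w x : Fin (n + 1) → ℝ) :
    ∑ i, (2 * x i ^ 2 + 2 * w i * x i * x (i + 1)) =
      ∑ i, w i * (x i + x (i + 1)) ^ 2 + ∑ i, (1 - w i) * (x i ^ 2 + x (i + 1) ^ 2) := by
  have hshift : ∑ i, x (i + 1) ^ 2 = ∑ i, x i ^ 2 :=
    Equiv.sum_comp (Equiv.addRight 1) fun i => x i ^ 2
  rw [← sum_add_distrib]
  calc ∑ i, (2 * x i ^ 2 + 2 * w i * x i * x (i + 1))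
      = ∑ i, (x i ^ 2 + x (i + 1) ^ 2 + 2 * w i * x i * x (i + 1)) := by
        simp only [sum_add_distrib, hshift, ← mul_sum]
        ring
    _ = _ := sum_congr rfl fun i _ => by ring

namespace Yhat

noncomputable def beta (k : ℕ) : ℝ := 1 / (2 * (k : ℝ) + 2)

/-- The entry of `Ŷ(k)` on the cycle edge `{i, i+1}` (0-based, mod `2k+1`); the corner entry is
the edge `{2k, 0}`. -/
noncomputable def weight (k i : ℕ) : ℝ :=
  if Even i ∧ i < 2 * k then 1 - beta k else 1 + beta k

theorem beta_pos (k : ℕ) : 0 < beta k := by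
  unfold beta
  positivity

theorem one_sub_beta_le_weight (k i : ℕ) : 1 - beta k ≤ weight k i := by
  unfold weight
  split_ifs <;> linarith [beta_pos k]

theorem sum_one_sub_weight_mul (k : ℕ) (x : Fin (2 * k + 1) → ℝ) :
    ∑ i : Fin (2 * k + 1), (1 - weight k i) * (x i ^ 2 + x (i + 1) ^ 2) =
      -2 * beta k * x (Fin.last (2 * k)) ^ 2 := by
  set y : ℕ → ℝ := fun i => x i ^ 2
  have hy : ∀ i : Fin (2 * k + 1), x i ^ 2 + x (i + 1) ^ 2 = y i + y (i + 1) := fun i => by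
    simp [y]
  have hsign : ∀ i ∈ range (2 * k), 1 - weight k i = beta k * (-1) ^ i := fun i hi => by
    have hi : i < 2 * k := mem_range.mp hi
    rcases Nat.even_or_odd i with h | h
    · simp [weight, h, hi, h.neg_one_pow]
    · simp [weight, Nat.not_even_iff_odd.mpr h, h.neg_one_pow]
  simp only [hy]
  rw [Fin.sum_univ_eq_sum_range (fun i => (1 - weight k i) * (y i + y (i + 1))), sum_range_succ,
    sum_congr rfl fun i hi => by rw [hsign i hi, mul_assoc], ← mul_sum,
    sum_range_neg_one_pow_mul_add_succ]
  simp [y, weight]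
  ring

end Yhat

open Yhat

theorem Yhat_apply {k : ℕ} (hk : 1 ≤ k) (i j : Fin (2 * k + 1)) :
    Yhat k i j = (if i = j then 2 else 0) + (if j = i + 1 then weight k i else 0)
      + (if i = j + 1 then weight k j else 0) := by
  simp only [Yhat, of_apply, Fin.ext_iff, Fin.val_add_one, Fin.val_last, weight, beta,
    Nat.odd_iff, Nat.even_iff]
  split_ifs <;> first | (exfalso; omega) | ring

theorem isHermitian_Yhat {k : ℕ} (hk : 1 ≤ k) : (Yhat k).IsHermitian :=
  IsHermitian.ext fun i j => by
    simp only [star_trivial, Yhat_apply hk, eq_comm (a := j)]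
    ring

theorem dotProduct_Yhat_mulVec {k : ℕ} (hk : 1 ≤ k) (x : Fin (2 * k + 1) → ℝ) :
    x ⬝ᵥ (Yhat k *ᵥ x) = ∑ i, (2 * x i ^ 2 + 2 * weight k i * x i * x (i + 1)) := by
  simp only [dotProduct, mulVec, Yhat_apply hk, add_mul, mul_sum, mul_add, sum_add_distrib,
    ite_mul, mul_ite, zero_mul, mul_zero, sum_ite_eq, sum_ite_eq', mem_univ, if_true]
  rw [sum_comm (f := fun i j => if i = j + 1 then _ else _)]
  simp only [sum_ite_eq', mem_univ, if_true, ← sum_add_distrib]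
  exact sum_congr rfl fun i _ => by ring

theorem dotProduct_Yhat_mulVec_eq_sum_sq {k : ℕ} (hk : 1 ≤ k) (x : Fin (2 * k + 1) → ℝ) :
    x ⬝ᵥ (Yhat k *ᵥ x) = ∑ i : Fin (2 * k + 1), weight k i * (x i + x (i + 1)) ^ 2
      - 2 * beta k * x (Fin.last (2 * k)) ^ 2 := by
  rw [dotProduct_Yhat_mulVec hk, sum_two_mul_sq_add_eq_sum_weight_mul_sq, sum_one_sub_weight_mul]
  ring

/-- For `k ≥ 2`, the matrix `Ŷ(k)` is positive definite. -/
theorem stmt12 (k : ℕ) (hk : 2 ≤ k) : (Yhat k).PosDef := by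
  have hk1 : 1 ≤ k := by omega
  refine posDef_iff_dotProduct_mulVec.mpr ⟨isHermitian_Yhat hk1, fun x hx => ?_⟩
  set S := ∑ i, (x i + x (i + 1)) ^ 2
  have hS : 0 < S := sum_sq_add_succ_pos_odd_cycle hx
  have hlast := sq_two_mul_le_odd_cycle x (Fin.last (2 * k))
  have hweight : (1 - beta k) * S ≤ ∑ i : Fin (2 * k + 1), weight k i * (x i + x (i + 1)) ^ 2 := by
    rw [mul_sum]
    gcongr with i
    exact one_sub_beta_le_weight k i
  have hcoef : beta k * (2 * k + 3) < 2 := by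
    rw [beta, div_mul_eq_mul_div, one_mul, div_lt_iff₀ (by positivity)]
    linarith
  rw [star_trivial, dotProduct_Yhat_mulVec_eq_sum_sq hk1]
  linarith [mul_le_mul_of_nonneg_left hlast (beta_pos k).le, mul_pos (sub_pos.mpr hcoef) hS]
end
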